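/- Let G be a graph, let t, p ∈ ℕ, let u, v ∈ V(G), and let B = (X, Y, Z, C) be a (t,p)-barrier in G separating u from v. Then there exist X' ⊆ X, Y' ⊆ Y, Z' ⊆ Z such that (X', Y', Z', C) is a reduced (t,p)-barrier in G separating u from v. -/

import Mathlib

open SimpleGraph

/-- `H` is an induced minor of `G`: there are pairwise disjoint nonempty connected
induced subgraphs `X w` of `G`, one for each vertex `w` of `H`, such that distinct
branch sets are anticomplete iff the corresponding vertices are non-adjacent in `H`. -/
def IsInducedMinor {V W : Type*} (G : SimpleGraph V) (H : SimpleGraph W) : Prop :=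
  ∃ X : W → Set V,
    (∀ w, (X w).Nonempty) ∧
    (∀ w, (G.induce (X w)).Connected) ∧
    (∀ w₁ w₂, w₁ ≠ w₂ → Disjoint (X w₁) (X w₂)) ∧
    (∀ w₁ w₂, w₁ ≠ w₂ →
      ((∀ a ∈ X w₁, ∀ b ∈ X w₂, ¬ G.Adj a b) ↔ ¬ H.Adj w₁ w₂))

/-- The `t`-by-`t` hexagonal grid (wall), in the brick-wall representation. -/
def hexGrid (t : ℕ) : SimpleGraph (Fin t × Fin (2 * t)) :=
  SimpleGraph.fromRel (fun a b =>
    (a.1 = b.1 ∧ a.2.val + 1 = b.2.val) ∨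
    (a.2 = b.2 ∧ a.1.val + 1 = b.1.val ∧ (a.1.val + a.2.val) % 2 = 0))

/-- Membership in the class `𝒞_t` of `{K_{t,t}, W_{t×t}}`-induced-minor-free graphs. -/
def MemCt (t : ℕ) {V : Type*} (G : SimpleGraph V) : Prop :=
  ¬ IsInducedMinor G (completeBipartiteGraph (Fin t) (Fin t)) ∧
  ¬ IsInducedMinor G (hexGrid t)

/-- Membership in `𝒞_t^*`: member of `𝒞_t` with no clique of size `t`. -/
def MemCtStar (t : ℕ) {V : Type*} (G : SimpleGraph V) : Prop :=
  MemCt t G ∧ G.CliqueFree t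

/-- A tree decomposition of `G` with tree `τ` and bags `χ`. -/
def IsTreeDecomp {V T : Type*} (G : SimpleGraph V) (τ : SimpleGraph T)
    (χ : T → Finset V) : Prop :=
  τ.IsTree ∧
  (∀ v : V, ∃ i, v ∈ χ i) ∧
  (∀ u v : V, G.Adj u v → ∃ i, u ∈ χ i ∧ v ∈ χ i) ∧
  (∀ v : V, (τ.induce {i | v ∈ χ i}).Connected)

/-- The treewidth of a finite graph: the least `k` such that `G` admits a tree
decomposition with all bags of size at most `k + 1`. -/
noncomputable def treewidth {V : Type*} [Fintype V] (G : SimpleGraph V) : ℕ :=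
  sInf { k | ∃ (n : ℕ) (τ : SimpleGraph (Fin n)) (χ : Fin n → Finset V),
    IsTreeDecomp G τ χ ∧ ∀ i, (χ i).card ≤ k + 1 }

/-- A walk that is an induced (chordless) path. -/
def IsInducedPathW {V : Type*} (G : SimpleGraph V) {u v : V} (P : G.Walk u v) : Prop :=
  P.IsPath ∧ ∀ a ∈ P.support, ∀ b ∈ P.support, G.Adj a b → s(a, b) ∈ P.edges

/-- The interior of a path: its support minus its two ends. -/
def interiorW {V : Type*} {G : SimpleGraph V} {u v : V} (P : G.Walk u v) : Set V :=
  {x | x ∈ P.support ∧ x ≠ u ∧ x ≠ v}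

/-- `S` separates `a` from `b` in `G`: every walk from `a` to `b` meets `S`. -/
def Separates {V : Type*} (G : SimpleGraph V) (S : Set V) (a b : V) : Prop :=
  ∀ P : G.Walk a b, ∃ x ∈ S, x ∈ P.support

/-- `conn_G(a,b)`: the minimum size of an `a`–`b`-separator. -/
noncomputable def connNum {V : Type*} [Fintype V] (G : SimpleGraph V) (a b : V) : ℕ :=
  sInf { k | ∃ S : Set V, a ∉ S ∧ b ∉ S ∧ Separates G S a b ∧ S.ncard = k }

/-- `A` and `B` are anticomplete: disjoint, with no edges between them. -/
def Anticomplete {V : Type*} (G : SimpleGraph V) (A B : Set V) : Prop :=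
  Disjoint A B ∧ ∀ a ∈ A, ∀ b ∈ B, ¬ G.Adj a b

/-- The graph `G \ M`: delete the vertices of `M` (they become isolated). -/
def delVerts {V : Type*} (G : SimpleGraph V) (M : Set V) : SimpleGraph V where
  Adj a b := G.Adj a b ∧ a ∉ M ∧ b ∉ M
  symm := ⟨fun _ _ h => ⟨h.1.symm, h.2.2, h.2.1⟩⟩
  loopless := ⟨fun a h => G.ne_of_adj h.1 rfl⟩

/-- The set of connected components of `C` in `G`: maximal connected subsets of `C`. -/
def ccSet {V : Type*} (G : SimpleGraph V) (C : Set V) : Set (Set V) :=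
  { D | D ⊆ C ∧ D.Nonempty ∧ (G.induce D).Connected ∧
      ∀ D' : Set V, D ⊆ D' → D' ⊆ C → (G.induce D').Connected → D' = D }

/-- `(a,b)` is `s`-wide: there are `s` pairwise internally anticomplete `a`–`b`-paths. -/
def Wide {V : Type*} (G : SimpleGraph V) (s : ℕ) (a b : V) : Prop :=
  ∃ P : Fin s → G.Walk a b,
    (∀ i, IsInducedPathW G (P i)) ∧
    (∀ i j, i ≠ j → ∀ x ∈ interiorW (P i), ∀ y ∈ interiorW (P j), x ≠ y ∧ ¬ G.Adj x y)

/-- `(a,b)` is an `s`-slim pair: non-adjacent and not `s`-wide. -/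
def SlimPair {V : Type*} (G : SimpleGraph V) (s : ℕ) (a b : V) : Prop :=
  a ≠ b ∧ ¬ G.Adj a b ∧ ¬ Wide G s a b

/-- `G` is `(t,s)`-slim: every stable set of size `t` contains an `s`-slim pair. -/
def TSSlim {V : Type*} (G : SimpleGraph V) (t s : ℕ) : Prop :=
  ∀ S : Finset V, S.card = t → (∀ a ∈ S, ∀ b ∈ S, a ≠ b → ¬ G.Adj a b) →
    ∃ a ∈ S, ∃ b ∈ S, a ≠ b ∧ SlimPair G s a b

/-- `(X,Y,Z,C)` is a `(t,p)`-barrier in `G`. -/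
def IsTPBarrier {V : Type*} (G : SimpleGraph V) (t p : ℕ) (X Y Z C : Set V) : Prop :=
  List.Pairwise Disjoint [X, Y, Z, C] ∧
  (∀ x ∈ X, ∀ z ∈ Z, ∀ P : G.Walk x z, IsInducedPathW G P →
    (∀ w ∈ P.support, w ∉ C) →
    ∃ x' ∈ X, ∃ z' ∈ Z, ∃ Q : G.Walk x' z',
      IsInducedPathW G Q ∧ (∀ w ∈ Q.support, w ∉ C) ∧
      (∀ w ∈ Q.support, w ∈ P.support) ∧ (∀ w ∈ interiorW Q, w ∈ Y)) ∧
  (∀ x ∈ X, ∀ z ∈ Z, ∀ P : G.Walk x z, IsInducedPathW G P →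
    (∀ w ∈ P.support, w ∉ C) →
    t ≤ Set.ncard { D ∈ ccSet G C | ∃ c ∈ D, ∃ w ∈ P.support, G.Adj c w }) ∧
  (∀ D ∈ ccSet G C, D.ncard ≤ p)

/-- The barrier `(X,Y,Z,C)` separates `u` from `v` in `G`. -/
def BarSeparates {V : Type*} (G : SimpleGraph V) (X Y Z C : Set V) (u v : V) : Prop :=
  u ∉ X ∪ Y ∪ Z ∪ C ∧ v ∉ X ∪ Y ∪ Z ∪ C ∧
  Separates G (X ∪ C) u v ∧ Separates G (Z ∪ C) u v

/-- A barrier is reduced: every component of `X ∪ Y ∪ Z` meets both `X` and `Z`. -/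
def ReducedBarrier {V : Type*} (G : SimpleGraph V) (X Y Z : Set V) : Prop :=
  ∀ D ∈ ccSet G (X ∪ Y ∪ Z), (D ∩ X).Nonempty ∧ (D ∩ Z).Nonempty

/-- `G` is `(s,t,p,c,f,g)`-slim-barred. -/
def SlimBarred {V : Type*} [Fintype V] (G : SimpleGraph V) (s t p : ℕ)
    (c f g : ℕ → ℕ) : Prop :=
  ∀ u v : V, SlimPair G s u v →
    ∃ X Y Z C M : Set V,
      List.Pairwise Disjoint [X, Y, Z, C, M] ∧
      (∀ w ∈ X ∪ Y ∪ Z ∪ C ∪ M, w ≠ u ∧ w ≠ v) ∧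
      IsTPBarrier (delVerts G M) t p X Y Z C ∧
      BarSeparates (delVerts G M) X Y Z C u v ∧
      Set.ncard (ccSet (delVerts G M) C) ≤ c (Fintype.card V) ∧
      M.ncard ≤ f (Fintype.card V) ∧
      (X ∪ Y ∪ Z).ncard ≤ g (Fintype.card V)

/-- `(a,b)` is `(x,y,z,p)`-mineable in `G`. -/
def Mineable {V : Type*} (G : SimpleGraph V) (a b : V) (x y z p : ℕ) : Prop :=
  ∃ Ys Xs : Fin x → Set V,
    (∀ i, a ∉ Ys i ∧ b ∉ Ys i) ∧
    (∀ i j, i ≠ j → Anticomplete G (Ys i) (Ys j)) ∧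
    (∀ i, (Xs i).Nonempty ∧ a ∉ Xs i ∧ b ∉ Xs i ∧
      Xs i ⊆ {w | w ∉ Ys i ∧ ∃ y' ∈ Ys i, G.Adj y' w}) ∧
    (∀ i, Separates (delVerts G {v | ∃ j, j < i ∧ v ∈ Ys j}) (Ys i ∪ Xs i) a b) ∧
    (delVerts G {v | ∃ j, v ∈ Ys j}).Reachable a b ∧
    (∀ i, Set.ncard (ccSet G (Ys i)) ≤ y) ∧
    (∀ i, ∀ D ∈ ccSet G (Ys i), D.ncard ≤ p) ∧
    (∀ w : V, Set.ncard {i : Fin x | w ∈ Ys i ∪ Xs i} ≤ z)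

/-- Two vertices are twins: same neighbourhoods away from each other. -/
def Twins {V : Type*} (G : SimpleGraph V) (u v : V) : Prop :=
  G.neighborSet u \ {v} = G.neighborSet v \ {u}

/-- A star structure on `G`: an induced star forest with vertex set `C ∪ L`, each
component a star with at least two vertices, with centers `C`, leaves `L`, and each
leaf `l` attached to the center `ctr l`. -/
structure StarStructure {V : Type*} (G : SimpleGraph V) (C L : Set V)
    (ctr : V → V) : Prop where
  disj : Disjoint C L
  ctrMem : ∀ l ∈ L, ctr l ∈ C ∧ G.Adj (ctr l) l
  hasLeaf : ∀ c ∈ C, ∃ l ∈ L, ctr l = c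
  inducedStar : ∀ a ∈ C ∪ L, ∀ b ∈ C ∪ L, G.Adj a b →
    (a ∈ C ∧ b ∈ L ∧ ctr b = a) ∨ (b ∈ C ∧ a ∈ L ∧ ctr a = b)

/-- Centers of the projection `F(G')` of the star forest onto the induced subgraph
of `G` with vertex set `W`. -/
def projCenters {V : Type*} (C L : Set V) (ctr : V → V) (W : Set V) : Set V :=
  {c | c ∈ C ∧ c ∈ W ∧ ∃ l, l ∈ L ∧ l ∈ W ∧ ctr l = c}

/-- The star of `F(G')` with center `c`. -/
def projStar {V : Type*} (L : Set V) (ctr : V → V) (W : Set V) (c : V) : Set V :=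
  insert c {l | l ∈ L ∧ l ∈ W ∧ ctr l = c}

/-- The vertex set of `F(G')`. -/
def projVerts {V : Type*} (C L : Set V) (ctr : V → V) (W : Set V) : Set V :=
  ⋃ c ∈ projCenters C L ctr W, projStar L ctr W c

/-- `X` is an `F(G')`-based set. -/
def FBasedSet {V : Type*} (C L : Set V) (ctr : V → V) (W X : Set V) : Prop :=
  ∀ c ∈ projCenters C L ctr W,
    (projStar L ctr W c ∩ X).Nonempty → projStar L ctr W c ⊆ X

/-- The `F(G')`-measure of a set `X`: the number of stars of `F(G')` meeting `X` plus
the number of vertices of `X` outside `F(G')`. -/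
noncomputable def FMeasure {V : Type*} (C L : Set V) (ctr : V → V) (W X : Set V) : ℕ :=
  Set.ncard {c ∈ projCenters C L ctr W | (projStar L ctr W c ∩ X).Nonempty} +
  Set.ncard (X \ projVerts C L ctr W)

/-- A tree decomposition of the induced subgraph of `G` with vertex set `W`. -/
def IsTreeDecompOn {V T : Type*} (G : SimpleGraph V) (W : Set V)
    (τ : SimpleGraph T) (χ : T → Finset V) : Prop :=
  τ.IsTree ∧
  (∀ i, (χ i : Set V) ⊆ W) ∧
  (∀ v ∈ W, ∃ i, v ∈ χ i) ∧
  (∀ u ∈ W, ∀ v ∈ W, G.Adj u v → ∃ i, u ∈ χ i ∧ v ∈ χ i) ∧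
  (∀ v : V, (τ.induce {i | v ∈ χ i}).Connected)

/-- `G` is `(F,r)`-based: every induced subgraph `G[W]` admits a tree decomposition in
which every bag is `F(G[W])`-based with `F(G[W])`-measure at most `r`. -/
def FrBased {V : Type*} [Fintype V] (G : SimpleGraph V) (C L : Set V)
    (ctr : V → V) (r : ℕ) : Prop :=
  ∀ W : Set V, ∃ (n : ℕ) (τ : SimpleGraph (Fin n)) (χ : Fin n → Finset V),
    IsTreeDecompOn G W τ χ ∧
    ∀ i, FBasedSet C L ctr W (χ i) ∧ FMeasure C L ctr W (χ i) ≤ r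

/-- Every component of `H` is a star or a single vertex. -/
def IsStarForest {W : Type*} (H : SimpleGraph W) : Prop :=
  H.IsAcyclic ∧ ∀ (u v : W) (P : H.Walk u v), P.IsPath → P.length ≤ 2

/-- `G` has a star coloring with `k` colors. -/
def HasStarColoring {V : Type*} (G : SimpleGraph V) (k : ℕ) : Prop :=
  ∃ f : V → Fin k, (∀ u v, G.Adj u v → f u ≠ f v) ∧
    ∀ i j : Fin k, IsStarForest (G.induce {v | f v = i ∨ f v = j})

/-- `G` contains an induced subgraph isomorphic to a proper subdivision of `K_s`. -/
def InducedProperSubdivisionK {V : Type*} (G : SimpleGraph V) (s : ℕ) : Prop :=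
  ∃ (v : Fin s → V) (P : ∀ i j : Fin s, G.Walk (v i) (v j)),
    Function.Injective v ∧
    (∀ i j, i ≠ j → ¬ G.Adj (v i) (v j)) ∧
    (∀ i j, i < j → IsInducedPathW G (P i j) ∧ (interiorW (P i j)).Nonempty) ∧
    (∀ i j k l, i < j → k < l → (i, j) ≠ (k, l) →
      ∀ x ∈ interiorW (P i j), ∀ y ∈ interiorW (P k l), x ≠ y ∧ ¬ G.Adj x y) ∧
    (∀ i j k, i < j → k ≠ i → k ≠ j →
      ∀ x ∈ interiorW (P i j), x ≠ v k ∧ ¬ G.Adj x (v k))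

/-- `S` is the vertex set of an induced path of `G`. -/
def IsPathSet {V : Type*} (G : SimpleGraph V) (S : Set V) : Prop :=
  ∃ (u v : V) (P : G.Walk u v), IsInducedPathW G P ∧ S = {x | x ∈ P.support}

/-- A linear induced `H`-model in `G`: an induced `H`-model all of whose branch sets
are paths. -/
def LinearInducedModel {V W : Type*} (G : SimpleGraph V) (H : SimpleGraph W) : Prop :=
  ∃ X : W → Set V,
    (∀ w, IsPathSet G (X w)) ∧
    (∀ w, (X w).Nonempty) ∧
    (∀ w₁ w₂, w₁ ≠ w₂ → Disjoint (X w₁) (X w₂)) ∧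
    (∀ w₁ w₂, w₁ ≠ w₂ →
      ((∀ a ∈ X w₁, ∀ b ∈ X w₂, ¬ G.Adj a b) ↔ ¬ H.Adj w₁ w₂))


/-!
Keep only the components of `X ∪ Y ∪ Z` that meet both `X` and `Z`, and intersect `X`, `Y`,
`Z` with their union `K = barrierCore G X Y Z`. An `X`–`Z` path with interior in `Y` is a
connected subset of `X ∪ Y ∪ Z` meeting `X` and `Z`, so it lies in `K`: the subpaths promised
by condition (1) survive, and condition (2) only gets weaker. A `u`–`v` walk avoiding `C` meets
`X` and `Z`, hence contains an induced `X`–`Z` path, hence such a subpath, whose ends lie in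
`X ∩ K` and `Z ∩ K`.
-/

namespace SimpleGraph.Walk

variable {V : Type*} {G : SimpleGraph V} {u v : V}

lemma exists_shorter_of_adj_getVert (p : G.Walk u v) {i j : ℕ} (hij : i + 1 < j)
    (hj : j ≤ p.length) (h : G.Adj (p.getVert i) (p.getVert j)) :
    ∃ q : G.Walk u v, q.length < p.length ∧ q.support ⊆ p.support := by
  refine ⟨(p.take i).append (cons h (p.drop j)), ?_, ?_⟩
  · simp only [length_append, length_cons, take_length, drop_length]
    omega
  · intro w hw
    simp only [support_append, support_cons, List.tail_cons, List.mem_append, support_take,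
      drop_support_eq_support_drop_min] at hw
    rcases hw with hw | hw
    · exact List.take_subset _ _ hw
    · exact List.drop_subset _ _ hw

lemma isChordless_of_forall_length_le (p : G.Walk u v)
    (hmin : ∀ q : G.Walk u v, q.support ⊆ p.support → p.length ≤ q.length) :
    p.IsChordless := by
  rw [isChordless_iff_forall_mem_edges]
  intro x y hx hy hxy
  obtain ⟨i, rfl, hi⟩ := mem_support_iff_exists_getVert.mp hx
  obtain ⟨j, rfl, hj⟩ := mem_support_iff_exists_getVert.mp hy
  clear hx hy
  wlog hij : i ≤ j generalizing i j
  · rw [Sym2.eq_swap]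
    exact this j hj i hi hxy.symm (by omega)
  obtain rfl | rfl | hij : j = i ∨ j = i + 1 ∨ i + 1 < j := by omega
  · exact absurd rfl hxy.ne
  · exact p.mk_mem_edges_iff_exists.mpr ⟨i, by omega, rfl⟩
  · obtain ⟨q, hlt, hsub⟩ := p.exists_shorter_of_adj_getVert hij hj hxy
    exact absurd (hmin q hsub) (not_le.mpr hlt)

lemma exists_isPath_isChordless_support_subset [DecidableEq V] (p : G.Walk u v) :
    ∃ q : G.Walk u v, q.IsPath ∧ q.IsChordless ∧ q.support ⊆ p.support := by
  obtain ⟨q, hq, hmin⟩ := (measure (length : G.Walk u v → ℕ)).wf.has_min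
    {q | q.support ⊆ p.support} ⟨p, List.Subset.refl _⟩
  have hbypass : q.bypass.support ⊆ p.support :=
    List.Subset.trans q.support_bypass_subset_support hq
  refine ⟨q.bypass, q.bypass_isPath, q.bypass.isChordless_of_forall_length_le ?_, hbypass⟩
  intro r hr
  exact q.length_bypass_le_length.trans (not_lt.mp (hmin r (List.Subset.trans hr hbypass)))

lemma exists_walk_support_subset {x y : V} (p : G.Walk u v) (hx : x ∈ p.support)
    (hy : y ∈ p.support) : ∃ q : G.Walk x y, q.support ⊆ p.support := by
  classical
  refine ⟨(p.takeUntil x hx).reverse.append (p.takeUntil y hy), fun w hw => ?_⟩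
  rw [mem_support_append_iff, support_reverse, List.mem_reverse] at hw
  exact hw.elim (p.support_takeUntil_subset_support hx ·) (p.support_takeUntil_subset_support hy ·)

end SimpleGraph.Walk

section Components

variable {V : Type*} {G : SimpleGraph V}

lemma exists_mem_ccSet_superset {S T : Set V} (hTS : T ⊆ S) (hT : (G.induce T).Connected) :
    ∃ D ∈ ccSet G S, T ⊆ D := by
  set 𝒟 := {D : Set V | T ⊆ D ∧ D ⊆ S ∧ (G.induce D).Connected}
  have hT𝒟 : T ∈ 𝒟 := ⟨subset_rfl, hTS, hT⟩
  obtain ⟨⟨t, ht⟩⟩ := hT.nonempty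
  have hconn : (G.induce (⋃₀ 𝒟)).Connected :=
    induce_sUnion_connected_of_pairwise_not_disjoint (S := 𝒟) ⟨T, hT𝒟⟩
      (fun hD hD' => ⟨t, hD.1 ht, hD'.1 ht⟩) (fun hD => hD.2.2)
  have hT_sub : T ⊆ ⋃₀ 𝒟 := Set.subset_sUnion_of_mem hT𝒟
  refine ⟨⋃₀ 𝒟, ⟨Set.sUnion_subset fun D hD => hD.2.1, ⟨t, hT_sub ht⟩, hconn, ?_⟩, hT_sub⟩
  intro D' hD' hD'S hD'conn
  have hD'𝒟 : D' ∈ 𝒟 := ⟨hT_sub.trans hD', hD'S, hD'conn⟩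
  exact (Set.subset_sUnion_of_mem hD'𝒟).antisymm hD'

lemma mem_of_mem_ccSet_sUnion {S : Set V} {𝒟 : Set (Set V)} (h𝒟 : 𝒟 ⊆ ccSet G S)
    {D : Set V} (hD : D ∈ ccSet G (⋃₀ 𝒟)) : D ∈ 𝒟 := by
  obtain ⟨hD𝒟, ⟨d, hd⟩, hDconn, hDmax⟩ := hD
  obtain ⟨D₀, hD₀, hdD₀⟩ := hD𝒟 hd
  obtain ⟨hD₀S, -, hD₀conn, hD₀max⟩ := h𝒟 hD₀
  have hDS : D ⊆ S := hD𝒟.trans (Set.sUnion_subset fun D' hD' => (h𝒟 hD').1)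
  have hunion : D ∪ D₀ = D₀ :=
    hD₀max _ Set.subset_union_right (Set.union_subset hDS hD₀S)
      (induce_union_connected hDconn.preconnected hD₀conn.preconnected ⟨d, hd, hdD₀⟩)
  have hDD₀ : D ⊆ D₀ := Set.union_eq_right.mp hunion
  rwa [← hDmax D₀ hDD₀ (Set.subset_sUnion_of_mem hD₀) hD₀conn]

lemma separates_union_of_forall_avoiding {S C : Set V} {u v : V}
    (h : ∀ P : G.Walk u v, (∀ w ∈ P.support, w ∉ C) → ∃ x ∈ S, x ∈ P.support) :
    Separates G (S ∪ C) u v := by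
  intro P
  by_cases hPC : ∀ w ∈ P.support, w ∉ C
  · obtain ⟨x, hx, hxP⟩ := h P hPC
    exact ⟨x, Or.inl hx, hxP⟩
  · push Not at hPC
    obtain ⟨w, hwP, hwC⟩ := hPC
    exact ⟨w, Or.inr hwC, hwP⟩

end Components

def barrierCore {V : Type*} (G : SimpleGraph V) (X Y Z : Set V) : Set V :=
  ⋃₀ {D ∈ ccSet G (X ∪ Y ∪ Z) | (D ∩ X).Nonempty ∧ (D ∩ Z).Nonempty}

section BarrierCore

variable {V : Type*} {G : SimpleGraph V} {X Y Z C : Set V} {t p : ℕ}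

lemma barrierCore_subset : barrierCore G X Y Z ⊆ X ∪ Y ∪ Z :=
  Set.sUnion_subset fun _ hD => hD.1.1

lemma support_subset_barrierCore {x z : V} (Q : G.Walk x z) (hx : x ∈ X) (hz : z ∈ Z)
    (hQ : interiorW Q ⊆ Y) : {w | w ∈ Q.support} ⊆ barrierCore G X Y Z := by
  have hQS : {w | w ∈ Q.support} ⊆ X ∪ Y ∪ Z := by
    intro w hw
    by_cases hwx : w = x
    · exact Or.inl (Or.inl (hwx ▸ hx))
    by_cases hwz : w = z
    · exact Or.inr (hwz ▸ hz)
    exact Or.inl (Or.inr (hQ ⟨hw, hwx, hwz⟩))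
  obtain ⟨D, hD, hQD⟩ := exists_mem_ccSet_superset hQS Q.connected_induce_support
  exact hQD.trans (Set.subset_sUnion_of_mem
    ⟨hD, ⟨x, hQD Q.start_mem_support, hx⟩, ⟨z, hQD Q.end_mem_support, hz⟩⟩)

lemma reducedBarrier_inter_barrierCore :
    ReducedBarrier G (X ∩ barrierCore G X Y Z) (Y ∩ barrierCore G X Y Z)
      (Z ∩ barrierCore G X Y Z) := by
  intro D hD
  rw [← Set.union_inter_distrib_right, ← Set.union_inter_distrib_right,
    Set.inter_eq_right.mpr barrierCore_subset] at hD
  have hDK : D ⊆ barrierCore G X Y Z := hD.1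
  obtain ⟨-, ⟨x, hxD, hx⟩, ⟨z, hzD, hz⟩⟩ := mem_of_mem_ccSet_sUnion (fun _ hD' => hD'.1) hD
  exact ⟨⟨x, hxD, hx, hDK hxD⟩, ⟨z, hzD, hz, hDK hzD⟩⟩

namespace IsTPBarrier

lemma exists_subpath_barrierCore (hB : IsTPBarrier G t p X Y Z C) {x z : V} (hx : x ∈ X)
    (hz : z ∈ Z) (P : G.Walk x z) (hP : IsInducedPathW G P) (hPC : ∀ w ∈ P.support, w ∉ C) :
    ∃ x' ∈ X ∩ barrierCore G X Y Z, ∃ z' ∈ Z ∩ barrierCore G X Y Z, ∃ Q : G.Walk x' z',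
      IsInducedPathW G Q ∧ (∀ w ∈ Q.support, w ∉ C) ∧ (∀ w ∈ Q.support, w ∈ P.support) ∧
      ∀ w ∈ interiorW Q, w ∈ Y ∩ barrierCore G X Y Z := by
  obtain ⟨x', hx', z', hz', Q, hQ, hQC, hQP, hQY⟩ := hB.2.1 x hx z hz P hP hPC
  have hQK := support_subset_barrierCore Q hx' hz' hQY
  exact ⟨x', ⟨hx', hQK Q.start_mem_support⟩, z', ⟨hz', hQK Q.end_mem_support⟩, Q, hQ, hQC,
    hQP, fun w hw => ⟨hQY w hw, hQK hw.1⟩⟩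

lemma inter_barrierCore (hB : IsTPBarrier G t p X Y Z C) :
    IsTPBarrier G t p (X ∩ barrierCore G X Y Z) (Y ∩ barrierCore G X Y Z)
      (Z ∩ barrierCore G X Y Z) C := by
  refine ⟨?_, fun x hx z hz => hB.exists_subpath_barrierCore hx.1 hz.1,
    fun x hx z hz => hB.2.2.1 x hx.1 z hz.1, hB.2.2.2⟩
  have hdisj := hB.1
  simp only [List.pairwise_cons, List.mem_cons, List.not_mem_nil, or_false, forall_eq_or_imp,
    forall_eq, IsEmpty.forall_iff, implies_true, List.Pairwise.nil, and_self, and_true]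
    at hdisj ⊢
  obtain ⟨⟨hXY, hXZ, hXC⟩, ⟨hYZ, hYC⟩, hZC⟩ := hdisj
  exact ⟨⟨hXY.mono inf_le_left inf_le_left, hXZ.mono inf_le_left inf_le_left,
    hXC.mono_left inf_le_left⟩, ⟨hYZ.mono inf_le_left inf_le_left, hYC.mono_left inf_le_left⟩,
    hZC.mono_left inf_le_left⟩

lemma exists_mem_barrierCore_of_walk (hB : IsTPBarrier G t p X Y Z C) {a b x z : V}
    (P : G.Walk a b) (hPC : ∀ w ∈ P.support, w ∉ C) (hx : x ∈ X) (hxP : x ∈ P.support)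
    (hz : z ∈ Z) (hzP : z ∈ P.support) :
    (∃ x' ∈ X ∩ barrierCore G X Y Z, x' ∈ P.support) ∧
      ∃ z' ∈ Z ∩ barrierCore G X Y Z, z' ∈ P.support := by
  classical
  obtain ⟨R, hRP⟩ := P.exists_walk_support_subset hxP hzP
  obtain ⟨R', hR'path, hR'chordless, hR'R⟩ := R.exists_isPath_isChordless_support_subset
  obtain ⟨x', hx', z', hz', Q, -, -, hQR', -⟩ := hB.exists_subpath_barrierCore hx hz R'
    ⟨hR'path, fun _ ha _ hb hab => hR'chordless.mem_edges ha hb hab⟩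
    (fun w hw => hPC w (hRP (hR'R hw)))
  exact ⟨⟨x', hx', hRP (hR'R (hQR' x' Q.start_mem_support))⟩,
    ⟨z', hz', hRP (hR'R (hQR' z' Q.end_mem_support))⟩⟩

lemma barSeparates_inter_barrierCore (hB : IsTPBarrier G t p X Y Z C) {u v : V}
    (hsep : BarSeparates G X Y Z C u v) :
    BarSeparates G (X ∩ barrierCore G X Y Z) (Y ∩ barrierCore G X Y Z)
      (Z ∩ barrierCore G X Y Z) C u v := by
  obtain ⟨hu, hv, hXsep, hZsep⟩ := hsep
  have hsub : X ∩ barrierCore G X Y Z ∪ Y ∩ barrierCore G X Y Z ∪ Z ∩ barrierCore G X Y Z ∪ C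
      ⊆ X ∪ Y ∪ Z ∪ C := by
    gcongr <;> exact Set.inter_subset_left
  have hmeet (P : G.Walk u v) (hPC : ∀ w ∈ P.support, w ∉ C) :
      (∃ x' ∈ X ∩ barrierCore G X Y Z, x' ∈ P.support) ∧
        ∃ z' ∈ Z ∩ barrierCore G X Y Z, z' ∈ P.support := by
    obtain ⟨x, hx, hxP⟩ := hXsep P
    obtain ⟨z, hz, hzP⟩ := hZsep P
    exact hB.exists_mem_barrierCore_of_walk P hPC (hx.resolve_right (hPC x hxP)) hxP
      (hz.resolve_right (hPC z hzP)) hzP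
  exact ⟨fun h => hu (hsub h), fun h => hv (hsub h),
    separates_union_of_forall_avoiding fun P hPC => (hmeet P hPC).1,
    separates_union_of_forall_avoiding fun P hPC => (hmeet P hPC).2⟩

end IsTPBarrier

end BarrierCore

theorem stmt3 {V : Type} (G : SimpleGraph V) (t p : ℕ) (u v : V)
    (X Y Z C : Set V)
    (hB : IsTPBarrier G t p X Y Z C)
    (hsep : BarSeparates G X Y Z C u v) :
    ∃ X' Y' Z' : Set V, X' ⊆ X ∧ Y' ⊆ Y ∧ Z' ⊆ Z ∧
      IsTPBarrier G t p X' Y' Z' C ∧ ReducedBarrier G X' Y' Z' ∧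
      BarSeparates G X' Y' Z' C u v :=
  ⟨_, _, _, Set.inter_subset_left, Set.inter_subset_left, Set.inter_subset_left,
    hB.inter_barrierCore, reducedBarrier_inter_barrierCore,
    hB.barSeparates_inter_barrierCore hsep⟩
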